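/- Let k : ℝ → ℝ satisfy: k(s) ≥ 0 for s ≥ 0, k is locally absolutely continuous on [0,∞) with a.e. derivative k', k(0) > 0, ∫₀^∞ k(s) ds < 1, and k'(s) ≤ −α₀ k(s) for a.e. s ≥ 0, for some α₀ > 0. Then for every α with 0 < α < α₀ the weighted derivative is integrable with ∫₀^∞ e^{αt} |k'(t)| dt ≤ k(0) + α·∫₀^∞ e^{αt} k(t) dt < ∞. -/

import Mathlib

/-!
Integrating by parts on `[0, N]` (`k` is absolutely continuous there) gives
`∫₀ᴺ e^{αt} k' = e^{αN} k(N) - k(0) - α ∫₀ᴺ e^{αt} k`.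
With `k' ≤ -α₀ k` and `k ≥ 0` this yields `(α₀ - α) ∫₀ᴺ e^{αt} k ≤ k(0)`, so `e^{αt} k` is
integrable on `(0, ∞)`. Since `k' ≤ 0`, the same identity bounds `∫₀ᴺ e^{αt} |k'|` by
`k(0) + α ∫₀^∞ e^{αt} k` uniformly in `N`, and letting `N → ∞` finishes the proof.
-/

open MeasureTheory Set Filter

theorem AbsolutelyContinuousOnInterval.congr {X : Type*} [PseudoMetricSpace X] {f g : ℝ → X}
    {a b : ℝ} (hf : AbsolutelyContinuousOnInterval f a b) (hfg : EqOn f g (uIcc a b)) :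
    AbsolutelyContinuousOnInterval g a b :=
  Tendsto.congr' (eventually_inf_principal.mpr <| .of_forall fun _ hE ↦
    Finset.sum_congr rfl fun i hi ↦ by rw [hfg (hE.1 i hi).1, hfg (hE.1 i hi).2]) hf

theorem absolutelyContinuousOnInterval_of_eq_add_integral {k k' : ℝ → ℝ} {a b : ℝ}
    (hk' : IntervalIntegrable k' volume a b)
    (hk : ∀ s ∈ uIcc a b, k s = k a + ∫ u in a..s, k' u) :
    AbsolutelyContinuousOnInterval k a b := by
  have hconst : AbsolutelyContinuousOnInterval (fun _ ↦ k a) a b :=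
    contDiffOn_const.absolutelyContinuousOnInterval
  exact (hconst.add (hk'.absolutelyContinuousOnInterval_intervalIntegral left_mem_uIcc)).congr
    fun s hs ↦ (hk s hs).symm

theorem intervalIntegrable_exp_mul_of_eq_add_integral {k k' : ℝ → ℝ} {a b : ℝ} (α : ℝ)
    (hk' : IntervalIntegrable k' volume a b)
    (hk : ∀ s ∈ uIcc a b, k s = k a + ∫ u in a..s, k' u) :
    IntervalIntegrable (fun t ↦ Real.exp (α * t) * k t) volume a b :=
  ((by fun_prop : Continuous fun t ↦ Real.exp (α * t)).continuousOn.mul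
    (absolutelyContinuousOnInterval_of_eq_add_integral hk' hk).continuousOn).intervalIntegrable

theorem ae_deriv_eq_of_eq_add_integral {k k' : ℝ → ℝ} {a b : ℝ}
    (hk' : IntervalIntegrable k' volume a b)
    (hk : ∀ s ∈ uIcc a b, k s = k a + ∫ u in a..s, k' u) :
    ∀ᵐ x, x ∈ uIcc a b → deriv k x = k' x := by
  have ha : ∀ᵐ x : ℝ, x ≠ a := by simp [ae_iff, measure_singleton]
  have hb : ∀ᵐ x : ℝ, x ≠ b := by simp [ae_iff, measure_singleton]
  filter_upwards [hk'.ae_hasDerivAt_integral, ha, hb] with x hx hxa hxb hxI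
  have hxIoo : x ∈ Ioo (min a b) (max a b) :=
    ⟨lt_of_le_of_ne hxI.1 (by grind), lt_of_le_of_ne hxI.2 (by grind)⟩
  have hk_near : k =ᶠ[nhds x] fun y ↦ k a + ∫ u in a..y, k' u :=
    eventually_of_mem (Ioo_mem_nhds hxIoo.1 hxIoo.2) fun y hy ↦ hk y (Ioo_subset_Icc_self hy)
  exact (((hx hxI a left_mem_uIcc).const_add (k a)).congr_of_eventuallyEq hk_near).deriv

theorem integral_exp_mul_eq_of_eq_add_integral {k k' : ℝ → ℝ} {a b : ℝ} (α : ℝ)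
    (hk' : IntervalIntegrable k' volume a b)
    (hk : ∀ s ∈ uIcc a b, k s = k a + ∫ u in a..s, k' u) :
    ∫ t in a..b, Real.exp (α * t) * k' t = Real.exp (α * b) * k b - Real.exp (α * a) * k a -
      α * ∫ t in a..b, Real.exp (α * t) * k t := by
  have hexp : ∀ t, HasDerivAt (fun t ↦ Real.exp (α * t)) (α * Real.exp (α * t)) t :=
    fun t ↦ by simpa [mul_comm] using ((hasDerivAt_id t).const_mul α).exp
  have hexp_smooth : ContDiff ℝ 1 fun t ↦ Real.exp (α * t) := by fun_prop
  have hexp_ac : AbsolutelyContinuousOnInterval (fun t ↦ Real.exp (α * t)) a b :=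
    hexp_smooth.contDiffOn.absolutelyContinuousOnInterval
  have hibp := hexp_ac.integral_mul_deriv_eq_deriv_mul
    (absolutelyContinuousOnInterval_of_eq_add_integral hk' hk)
  simp only [fun t ↦ (hexp t).deriv, mul_assoc, intervalIntegral.integral_const_mul] at hibp
  rw [← hibp]
  refine intervalIntegral.integral_congr_ae ?_
  filter_upwards [ae_deriv_eq_of_eq_add_integral hk' hk] with t ht htI
  rw [ht (uIoc_subset_uIcc htI)]

theorem integrableOn_Ioi_and_integral_le_of_intervalIntegral_le {f : ℝ → ℝ} {a C : ℝ}
    (hf_nonneg : ∀ t ∈ Ioi a, 0 ≤ f t)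
    (hf_int : ∀ b, a ≤ b → IntervalIntegrable f volume a b)
    (hf_le : ∀ b, a ≤ b → ∫ t in a..b, f t ≤ C) :
    IntegrableOn f (Ioi a) ∧ ∫ t in Ioi a, f t ≤ C := by
  have hnorm : ∀ b, a ≤ b → ∫ t in a..b, ‖f t‖ = ∫ t in a..b, f t := fun b hab ↦
    intervalIntegral.integral_congr_ae (.of_forall fun t ht ↦ by
      rw [uIoc_of_le hab] at ht
      exact Real.norm_of_nonneg (hf_nonneg t ht.1))
  have hf_Ioc : ∀ b, IntegrableOn f (Ioc a b) := fun b ↦ by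
    rcases le_total a b with hab | hba
    · exact (hf_int b hab).1
    · simp [Ioc_eq_empty_of_le hba]
  have hf_Ioi : IntegrableOn f (Ioi a) :=
    integrableOn_Ioi_of_intervalIntegral_norm_bounded C a hf_Ioc tendsto_id
      (eventually_ge_atTop a |>.mono fun b hab ↦ (hnorm b hab).trans_le (hf_le b hab))
  refine ⟨hf_Ioi, le_of_tendsto (intervalIntegral_tendsto_integral_Ioi a hf_Ioi tendsto_id) ?_⟩
  exact eventually_ge_atTop a |>.mono hf_le

theorem intervalIntegral_le_integral_Ioi {f : ℝ → ℝ} {a b : ℝ} (hab : a ≤ b)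
    (hf : IntegrableOn f (Ioi a)) (hf_nonneg : ∀ t ∈ Ioi a, 0 ≤ f t) :
    ∫ t in a..b, f t ≤ ∫ t in Ioi a, f t := by
  rw [intervalIntegral.integral_of_le hab]
  exact setIntegral_mono_set hf ((ae_restrict_iff' measurableSet_Ioi).mpr (.of_forall hf_nonneg))
    Ioc_subset_Ioi_self.eventuallyLE

section Kernel

variable {k k' : ℝ → ℝ} {α α₀ N : ℝ}

theorem integral_exp_mul_le_of_deriv_le (hN : 0 ≤ N) (hαα₀ : α < α₀)
    (hk' : IntervalIntegrable k' volume 0 N)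
    (hk : ∀ s ∈ uIcc 0 N, k s = k 0 + ∫ u in (0 : ℝ)..s, k' u) (hkN : 0 ≤ k N)
    (hk'_le : ∀ᵐ t, t ∈ Icc 0 N → k' t ≤ -α₀ * k t) :
    ∫ t in (0 : ℝ)..N, Real.exp (α * t) * k t ≤ k 0 / (α₀ - α) := by
  have hibp := integral_exp_mul_eq_of_eq_add_integral α hk' hk
  have hmono : ∫ t in (0 : ℝ)..N, Real.exp (α * t) * k' t ≤
      ∫ t in (0 : ℝ)..N, -α₀ * (Real.exp (α * t) * k t) := by
    refine intervalIntegral.integral_mono_ae_restrict hN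
      ((hk'.continuousOn_mul (by fun_prop : Continuous fun t ↦ Real.exp (α * t)).continuousOn))
      ((intervalIntegrable_exp_mul_of_eq_add_integral α hk' hk).const_mul _) ?_
    filter_upwards [ae_restrict_of_ae hk'_le, ae_restrict_mem measurableSet_Icc] with t ht htI
    rw [mul_left_comm]
    exact mul_le_mul_of_nonneg_left (ht htI) (Real.exp_pos _).le
  rw [intervalIntegral.integral_const_mul] at hmono
  rw [mul_zero, Real.exp_zero, one_mul] at hibp
  rw [le_div_iff₀ (by linarith)]
  nlinarith [mul_nonneg (Real.exp_pos (α * N)).le hkN]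

theorem integral_exp_mul_abs_deriv_eq (hN : 0 ≤ N)
    (hk' : IntervalIntegrable k' volume 0 N)
    (hk : ∀ s ∈ uIcc 0 N, k s = k 0 + ∫ u in (0 : ℝ)..s, k' u)
    (hk'_nonpos : ∀ᵐ t, t ∈ Icc 0 N → k' t ≤ 0) :
    ∫ t in (0 : ℝ)..N, Real.exp (α * t) * |k' t| =
      k 0 - Real.exp (α * N) * k N + α * ∫ t in (0 : ℝ)..N, Real.exp (α * t) * k t := by
  have hibp := integral_exp_mul_eq_of_eq_add_integral α hk' hk
  rw [mul_zero, Real.exp_zero, one_mul] at hibp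
  have habs : ∫ t in (0 : ℝ)..N, Real.exp (α * t) * |k' t| =
      -∫ t in (0 : ℝ)..N, Real.exp (α * t) * k' t := by
    rw [← intervalIntegral.integral_neg]
    refine intervalIntegral.integral_congr_ae ?_
    filter_upwards [hk'_nonpos] with t ht htI
    rw [uIoc_of_le hN] at htI
    rw [abs_of_nonpos (ht (Ioc_subset_Icc_self htI)), mul_neg]
  rw [habs, hibp]
  ring

end Kernel

theorem stmt_18_general
    (k k' : ℝ → ℝ) (α₀ : ℝ)
    (hk_nonneg : ∀ s : ℝ, 0 ≤ s → 0 ≤ k s)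
    (hk'_int : ∀ s : ℝ, 0 ≤ s → IntervalIntegrable k' volume 0 s)
    (hk_ac : ∀ s : ℝ, 0 ≤ s → k s = k 0 + ∫ u in (0 : ℝ)..s, k' u)
    (hk' : ∀ᵐ s : ℝ, 0 ≤ s → k' s ≤ -α₀ * k s)
    (α : ℝ) (hα : 0 < α) (hαα₀ : α < α₀) :
    IntegrableOn (fun t => Real.exp (α * t) * |k' t|) (Set.Ioi (0 : ℝ)) ∧
    ∫ t in Set.Ioi (0 : ℝ), Real.exp (α * t) * |k' t| ≤
      k 0 + α * ∫ t in Set.Ioi (0 : ℝ), Real.exp (α * t) * k t := by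
  have hk_uIcc : ∀ N, 0 ≤ N → ∀ s ∈ uIcc 0 N, k s = k 0 + ∫ u in (0 : ℝ)..s, k' u :=
    fun N hN s hs ↦ hk_ac s (uIcc_of_le hN ▸ hs).1
  have hk'_le : ∀ N : ℝ, ∀ᵐ t, t ∈ Icc 0 N → k' t ≤ -α₀ * k t :=
    fun N ↦ hk'.mono fun t ht htI ↦ ht htI.1
  have hk'_nonpos : ∀ N : ℝ, ∀ᵐ t, t ∈ Icc 0 N → k' t ≤ 0 := fun N ↦
    (hk'_le N).mono fun t ht htI ↦ (ht htI).trans (by nlinarith [hk_nonneg t htI.1])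
  have hexp_k_nonneg : ∀ t ∈ Ioi (0 : ℝ), 0 ≤ Real.exp (α * t) * k t :=
    fun t ht ↦ mul_nonneg (Real.exp_pos _).le (hk_nonneg t (le_of_lt ht))
  obtain ⟨hexp_k_int, -⟩ := integrableOn_Ioi_and_integral_le_of_intervalIntegral_le hexp_k_nonneg
    (fun N hN ↦ intervalIntegrable_exp_mul_of_eq_add_integral α (hk'_int N hN) (hk_uIcc N hN))
    (fun N hN ↦ integral_exp_mul_le_of_deriv_le hN hαα₀ (hk'_int N hN) (hk_uIcc N hN)
      (hk_nonneg N hN) (hk'_le N))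
  refine integrableOn_Ioi_and_integral_le_of_intervalIntegral_le (fun t _ ↦ by positivity)
    (fun N hN ↦ ?_) fun N hN ↦ ?_
  · exact (hk'_int N hN).abs.continuousOn_mul
      (by fun_prop : Continuous fun t ↦ Real.exp (α * t)).continuousOn
  · rw [integral_exp_mul_abs_deriv_eq hN (hk'_int N hN) (hk_uIcc N hN) (hk'_nonpos N)]
    have := intervalIntegral_le_integral_Ioi hN hexp_k_int hexp_k_nonneg
    nlinarith [mul_nonneg (Real.exp_pos (α * N)).le (hk_nonneg N hN)]

/-- the claim `k' ∈ L_{1,−α}` in the Lemma of Section 4 of the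
paper.  Under the standing assumptions on the kernel `k`, for `0 < α < α₀` the
weighted derivative is integrable with
`∫₀^∞ e^{αt}|k'(t)| dt ≤ k(0) + α ∫₀^∞ e^{αt} k(t) dt < ∞`. -/
theorem stmt_18
    (k k' : ℝ → ℝ) (α₀ : ℝ) (hα₀ : 0 < α₀)
    (hk_nonneg : ∀ s : ℝ, 0 ≤ s → 0 ≤ k s)
    (hk'_int : ∀ s : ℝ, 0 ≤ s → IntervalIntegrable k' volume 0 s)
    (hk_ac : ∀ s : ℝ, 0 ≤ s → k s = k 0 + ∫ u in (0 : ℝ)..s, k' u)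
    (hk0 : 0 < k 0)
    (hk_int1 : ∫ s in Set.Ioi (0 : ℝ), k s < 1)
    (hk' : ∀ᵐ s : ℝ, 0 ≤ s → k' s ≤ -α₀ * k s)
    (α : ℝ) (hα : 0 < α) (hαα₀ : α < α₀) :
    IntegrableOn (fun t => Real.exp (α * t) * |k' t|) (Set.Ioi (0 : ℝ)) ∧
    ∫ t in Set.Ioi (0 : ℝ), Real.exp (α * t) * |k' t| ≤
      k 0 + α * ∫ t in Set.Ioi (0 : ℝ), Real.exp (α * t) * k t :=
  stmt_18_general k k' α₀ hk_nonneg hk'_int hk_ac hk' α hα hαα₀
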